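/- arXiv:2005.11967 — 4 statements merged into one kernel-verified Lean document; each statement's English description precedes it below -/
import Mathlib

section
/- For every τ ∈ (0,1) and all real numbers u and v, ρ_τ(u − v) − ρ_τ(u) = −v·(τ − 1{u ≤ 0}) + ∫₀^v (1{u ≤ s} − 1{u ≤ 0}) ds, where the integral is the oriented integral from 0 to v (Knight's identity, used to decompose the quantile-regression objective into a score term and a quadratic term). -/
open MeasureTheory

/-- The check function `ρ_τ(u) = u (τ - 1{u ≤ 0})`. -/
noncomputable def checkFun (τ u : ℝ) : ℝ := u * (τ - if u ≤ 0 then 1 else 0)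

lemma stepMono (u : ℝ) : Monotone (fun s : ℝ => if u ≤ s then (1:ℝ) else 0) := by
  intro x y hxy
  dsimp only
  split_ifs with h1 h2
  · norm_num
  · exact absurd (h1.trans hxy) h2
  · norm_num
  · norm_num

lemma stepII (u a b : ℝ) :
    IntervalIntegrable (fun s : ℝ => if u ≤ s then (1:ℝ) else 0) volume a b :=
  (stepMono u).intervalIntegrable

lemma aux_le (u a b : ℝ) (hab : a ≤ b) :
    ∫ s in a..b, (if u ≤ s then (1:ℝ) else 0) = max b u - max a u := by
  have huae : ∀ᵐ x : ℝ, x ≠ u := by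
    simp [MeasureTheory.ae_iff, Real.volume_singleton]
  rcases le_total b u with hbu | hub
  · rw [max_eq_right hbu, max_eq_right (hab.trans hbu), sub_self]
    apply intervalIntegral.integral_zero_ae
    filter_upwards [huae] with x hxu hx
    rw [Set.uIoc_of_le hab] at hx
    have : ¬ u ≤ x := fun h => hxu (le_antisymm (hx.2.trans hbu) h)
    simp [this]
  · rcases le_total u a with hua | hau
    · rw [max_eq_left (hua.trans hab), max_eq_left hua]
      rw [intervalIntegral.integral_congr (g := fun _ => (1:ℝ))]
      · simp
      · intro x hx
        rw [Set.uIcc_of_le hab] at hx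
        simp [hua.trans hx.1]
    · have h1 : ∫ s in a..u, (if u ≤ s then (1:ℝ) else 0) = 0 := by
        apply intervalIntegral.integral_zero_ae
        filter_upwards [huae] with x hxu hx
        rw [Set.uIoc_of_le hau] at hx
        have : ¬ u ≤ x := fun h => hxu (le_antisymm hx.2 h)
        simp [this]
      have h2 : ∫ s in u..b, (if u ≤ s then (1:ℝ) else 0) = b - u := by
        rw [intervalIntegral.integral_congr (g := fun _ => (1:ℝ))]
        · simp
        · intro x hx
          rw [Set.uIcc_of_le hub] at hx
          simp [hx.1]
      rw [← intervalIntegral.integral_add_adjacent_intervals (stepII u a u) (stepII u u b),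
        h1, h2, max_eq_left hub, max_eq_right hau]
      ring

lemma aux (u a b : ℝ) :
    ∫ s in a..b, (if u ≤ s then (1:ℝ) else 0) = max b u - max a u := by
  rcases le_total a b with h | h
  · exact aux_le u a b h
  · rw [intervalIntegral.integral_symm, aux_le u b a h]; ring

/-- Knight's identity. -/
theorem knight_identity (τ : ℝ) (hτ : τ ∈ Set.Ioo (0 : ℝ) 1) (u v : ℝ) :
    checkFun τ (u - v) - checkFun τ u
      = -v * (τ - if u ≤ 0 then 1 else 0)
        + ∫ s in (0 : ℝ)..v,
            ((if u ≤ s then (1 : ℝ) else 0) - if u ≤ 0 then 1 else 0) := by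
  rw [intervalIntegral.integral_sub (stepII u 0 v) (intervalIntegrable_const),
    intervalIntegral.integral_const, aux u 0 v]
  unfold checkFun
  simp only [smul_eq_mul]
  split_ifs with h1 h2 h2
  · rw [max_eq_left (by linarith : u ≤ v), max_eq_left h2]; ring
  · rw [max_eq_left (by linarith : u ≤ v), max_eq_right (by linarith : (0:ℝ) ≤ u)]; ring
  · rw [max_eq_right (by linarith : v ≤ u), max_eq_left h2]; ring
  · rw [max_eq_right (by linarith : v ≤ u), max_eq_right (by linarith : (0:ℝ) ≤ u)]; ring
end

section
/- Let (Ω, P) be a probability space, τ ∈ (0,1), f₁ > 0 and f₀ > 0 real constants, and M₁, M₀ : Ω → ℝ square-integrable random variables. Define Σ = (τ − τ² − E[M₁²])/f₁² + (τ − τ² − E[M₀²])/f₀² + (1/2)·E[(M₁/f₁ − M₀/f₀)²] and Σ† = (τ − τ²)/f₁² + (τ − τ²)/f₀². Then Σ† − Σ = (1/2)·E[(M₁/f₁ + M₀/f₀)²]; in particular Σ† ≥ Σ, with equality when M₁ = 0 and M₀ = 0 almost surely. -/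
open MeasureTheory

/-! Rescaling by the densities, put `x = M₁/f₁` and `y = M₀/f₀`. Expanding `Σ`, the terms in
`τ − τ²` cancel against `Σ†`, and what is left is `∫ x² + ∫ y² − ½ ∫ (x − y)²`, which by the
parallelogram law `(x − y)² + (x + y)² = 2x² + 2y²` equals `½ ∫ (x + y)² ≥ 0`. -/

namespace MeasureTheory

variable {α : Type*} [MeasurableSpace α] {μ : Measure α}

theorem MemLp.div_const {𝕜 : Type*} [NormedDivisionRing 𝕜] {f : α → 𝕜} {p : ENNReal}
    (hf : MemLp f p μ) (c : 𝕜) :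
    MemLp (fun a => f a / c) p μ := by
  simpa only [div_eq_mul_inv] using hf.mul_const c⁻¹

theorem integral_div_const_sq (f : α → ℝ) (c : ℝ) :
    ∫ a, (f a / c) ^ 2 ∂μ = (∫ a, f a ^ 2 ∂μ) / c ^ 2 := by
  simp only [div_pow, integral_div]

theorem integral_sq_sub_add_integral_sq_add {f g : α → ℝ} (hf : MemLp f 2 μ) (hg : MemLp g 2 μ) :
    ∫ a, (f a - g a) ^ 2 ∂μ + ∫ a, (f a + g a) ^ 2 ∂μ
      = 2 * ∫ a, f a ^ 2 ∂μ + 2 * ∫ a, g a ^ 2 ∂μ := by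
  have parallelogram : ∀ a, (f a - g a) ^ 2 + (f a + g a) ^ 2 = 2 * f a ^ 2 + 2 * g a ^ 2 :=
    fun a => by ring
  have hsub : Integrable (fun a => (f a - g a) ^ 2) μ := (hf.sub hg).integrable_sq
  have hadd : Integrable (fun a => (f a + g a) ^ 2) μ := (hf.add hg).integrable_sq
  rw [← integral_add hsub hadd,
    ← integral_const_mul, ← integral_const_mul,
    ← integral_add (hf.integrable_sq.const_mul 2) (hg.integrable_sq.const_mul 2)]
  simp only [parallelogram]

end MeasureTheory

theorem variance_comparison_srs_general
    {Ω : Type*} [MeasurableSpace Ω] (P : Measure Ω)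
    (τ f₁ f₀ : ℝ)
    (M₁ M₀ : Ω → ℝ) (hM₁ : MemLp M₁ 2 P) (hM₀ : MemLp M₀ 2 P) :
    ((τ - τ ^ 2) / f₁ ^ 2 + (τ - τ ^ 2) / f₀ ^ 2)
        - ((τ - τ ^ 2 - ∫ ω, (M₁ ω) ^ 2 ∂P) / f₁ ^ 2
            + (τ - τ ^ 2 - ∫ ω, (M₀ ω) ^ 2 ∂P) / f₀ ^ 2
            + (1 / 2) * ∫ ω, (M₁ ω / f₁ - M₀ ω / f₀) ^ 2 ∂P)
      = (1 / 2) * ∫ ω, (M₁ ω / f₁ + M₀ ω / f₀) ^ 2 ∂P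
    ∧ ((τ - τ ^ 2 - ∫ ω, (M₁ ω) ^ 2 ∂P) / f₁ ^ 2
        + (τ - τ ^ 2 - ∫ ω, (M₀ ω) ^ 2 ∂P) / f₀ ^ 2
        + (1 / 2) * ∫ ω, (M₁ ω / f₁ - M₀ ω / f₀) ^ 2 ∂P)
        ≤ (τ - τ ^ 2) / f₁ ^ 2 + (τ - τ ^ 2) / f₀ ^ 2
    ∧ ((M₁ =ᵐ[P] 0 ∧ M₀ =ᵐ[P] 0) →
        ((τ - τ ^ 2 - ∫ ω, (M₁ ω) ^ 2 ∂P) / f₁ ^ 2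
          + (τ - τ ^ 2 - ∫ ω, (M₀ ω) ^ 2 ∂P) / f₀ ^ 2
          + (1 / 2) * ∫ ω, (M₁ ω / f₁ - M₀ ω / f₀) ^ 2 ∂P)
          = (τ - τ ^ 2) / f₁ ^ 2 + (τ - τ ^ 2) / f₀ ^ 2) := by
  have parallelogram := integral_sq_sub_add_integral_sq_add (hM₁.div_const f₁) (hM₀.div_const f₀)
  rw [integral_div_const_sq, integral_div_const_sq] at parallelogram
  have gap : ((τ - τ ^ 2) / f₁ ^ 2 + (τ - τ ^ 2) / f₀ ^ 2)
        - ((τ - τ ^ 2 - ∫ ω, (M₁ ω) ^ 2 ∂P) / f₁ ^ 2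
            + (τ - τ ^ 2 - ∫ ω, (M₀ ω) ^ 2 ∂P) / f₀ ^ 2
            + (1 / 2) * ∫ ω, (M₁ ω / f₁ - M₀ ω / f₀) ^ 2 ∂P)
      = (1 / 2) * ∫ ω, (M₁ ω / f₁ + M₀ ω / f₀) ^ 2 ∂P := by
    linear_combination (-1 / 2 : ℝ) * parallelogram
  have gap_nonneg : 0 ≤ ∫ ω, (M₁ ω / f₁ + M₀ ω / f₀) ^ 2 ∂P :=
    integral_nonneg fun ω => sq_nonneg _
  refine ⟨gap, by linarith, fun ⟨h₁, h₀⟩ => ?_⟩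
  have gap_eq_zero : ∫ ω, (M₁ ω / f₁ + M₀ ω / f₀) ^ 2 ∂P = 0 := by
    refine integral_eq_zero_of_ae ?_
    filter_upwards [h₁, h₀] with ω hω₁ hω₀
    simp [hω₁, hω₀]
  linarith

/-- Comparison of the asymptotic variance of the QTE estimator under matched-pairs design
(`Σ`) with that under simple random sampling (`Σ†`):
`Σ† − Σ = (1/2)·E[(M₁/f₁ + M₀/f₀)²] ≥ 0`, with equality when `M₁ = 0` and `M₀ = 0` a.s. -/
theorem variance_comparison_srs
    {Ω : Type*} [MeasurableSpace Ω] (P : Measure Ω) [IsProbabilityMeasure P]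
    (τ f₁ f₀ : ℝ) (hτ : τ ∈ Set.Ioo (0 : ℝ) 1) (hf₁ : 0 < f₁) (hf₀ : 0 < f₀)
    (M₁ M₀ : Ω → ℝ) (hM₁ : MemLp M₁ 2 P) (hM₀ : MemLp M₀ 2 P) :
    ((τ - τ ^ 2) / f₁ ^ 2 + (τ - τ ^ 2) / f₀ ^ 2)
        - ((τ - τ ^ 2 - ∫ ω, (M₁ ω) ^ 2 ∂P) / f₁ ^ 2
            + (τ - τ ^ 2 - ∫ ω, (M₀ ω) ^ 2 ∂P) / f₀ ^ 2
            + (1 / 2) * ∫ ω, (M₁ ω / f₁ - M₀ ω / f₀) ^ 2 ∂P)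
      = (1 / 2) * ∫ ω, (M₁ ω / f₁ + M₀ ω / f₀) ^ 2 ∂P
    ∧ ((τ - τ ^ 2 - ∫ ω, (M₁ ω) ^ 2 ∂P) / f₁ ^ 2
        + (τ - τ ^ 2 - ∫ ω, (M₀ ω) ^ 2 ∂P) / f₀ ^ 2
        + (1 / 2) * ∫ ω, (M₁ ω / f₁ - M₀ ω / f₀) ^ 2 ∂P)
        ≤ (τ - τ ^ 2) / f₁ ^ 2 + (τ - τ ^ 2) / f₀ ^ 2
    ∧ ((M₁ =ᵐ[P] 0 ∧ M₀ =ᵐ[P] 0) →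
        ((τ - τ ^ 2 - ∫ ω, (M₁ ω) ^ 2 ∂P) / f₁ ^ 2
          + (τ - τ ^ 2 - ∫ ω, (M₀ ω) ^ 2 ∂P) / f₀ ^ 2
          + (1 / 2) * ∫ ω, (M₁ ω / f₁ - M₀ ω / f₀) ^ 2 ∂P)
          = (τ - τ ^ 2) / f₁ ^ 2 + (τ - τ ^ 2) / f₀ ^ 2) :=
  variance_comparison_srs_general P τ f₁ f₀ M₁ M₀ hM₁ hM₀
end

section
/- Let (Ω, P) be a probability space, τ ∈ (0,1), f₁ > 0 and f₀ > 0 real constants, and M₁, M₀ : Ω → ℝ square-integrable random variables. Define Σ = (τ − τ² − E[M₁²])/f₁² + (τ − τ² − E[M₀²])/f₀² + (1/2)·E[(M₁/f₁ − M₀/f₀)²] and Σᵖ = (τ − τ²)/f₁² + (τ − τ²)/f₀² − 2·E[M₁M₀]/(f₁f₀). Then Σᵖ − Σ = (1/2)·E[(M₁/f₁ − M₀/f₀)²] ≥ 0, so the naive multiplier bootstrap of the pairs is conservative. -/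
open MeasureTheory

/-! `Σᵖ` and `Σ` differ only through their `M`-terms, and expanding the square
`E[(M₁/f₁ − M₀/f₀)²] = E[M₁²]/f₁² + E[M₀²]/f₀² − 2·E[M₁M₀]/(f₁f₀)` shows that this difference
is exactly half of that square's mean, which is nonnegative. -/

section SquareExpansion

variable {Ω : Type*} [MeasurableSpace Ω] {μ : Measure Ω} {X Y : Ω → ℝ}

theorem integral_sub_sq_of_memLp (hX : MemLp X 2 μ) (hY : MemLp Y 2 μ) :
    ∫ ω, (X ω - Y ω) ^ 2 ∂μ
      = ∫ ω, X ω ^ 2 ∂μ + ∫ ω, Y ω ^ 2 ∂μ - 2 * ∫ ω, X ω * Y ω ∂μ := by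
  have hXY : Integrable (fun ω => X ω * Y ω) μ := hX.integrable_mul hY
  have hsq : Integrable (fun ω => X ω ^ 2 + Y ω ^ 2) μ := hX.integrable_sq.add hY.integrable_sq
  simp_rw [sub_sq', mul_assoc]
  rw [integral_sub hsq (hXY.const_mul 2),
    integral_add hX.integrable_sq hY.integrable_sq, integral_const_mul]

theorem integral_div_sub_div_sq_of_memLp (hX : MemLp X 2 μ) (hY : MemLp Y 2 μ) (a b : ℝ) :
    ∫ ω, (X ω / a - Y ω / b) ^ 2 ∂μ
      = (∫ ω, X ω ^ 2 ∂μ) / a ^ 2 + (∫ ω, Y ω ^ 2 ∂μ) / b ^ 2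
        - 2 * (∫ ω, X ω * Y ω ∂μ) / (a * b) := by
  simp_rw [div_eq_mul_inv]
  rw [integral_sub_sq_of_memLp (hX.mul_const a⁻¹) (hY.mul_const b⁻¹)]
  simp_rw [mul_pow, mul_mul_mul_comm (X _) a⁻¹]
  rw [integral_mul_const, integral_mul_const, integral_mul_const]
  ring

end SquareExpansion

theorem variance_comparison_pairs_bootstrap_general
    {Ω : Type*} [MeasurableSpace Ω] (P : Measure Ω)
    (τ f₁ f₀ : ℝ)
    (M₁ M₀ : Ω → ℝ) (hM₁ : MemLp M₁ 2 P) (hM₀ : MemLp M₀ 2 P) :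
    ((τ - τ ^ 2) / f₁ ^ 2 + (τ - τ ^ 2) / f₀ ^ 2
        - 2 * (∫ ω, M₁ ω * M₀ ω ∂P) / (f₁ * f₀))
        - ((τ - τ ^ 2 - ∫ ω, (M₁ ω) ^ 2 ∂P) / f₁ ^ 2
            + (τ - τ ^ 2 - ∫ ω, (M₀ ω) ^ 2 ∂P) / f₀ ^ 2
            + (1 / 2) * ∫ ω, (M₁ ω / f₁ - M₀ ω / f₀) ^ 2 ∂P)
      = (1 / 2) * ∫ ω, (M₁ ω / f₁ - M₀ ω / f₀) ^ 2 ∂P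
    ∧ 0 ≤ (1 / 2) * ∫ ω, (M₁ ω / f₁ - M₀ ω / f₀) ^ 2 ∂P := by
  have hsq_nonneg : 0 ≤ ∫ ω, (M₁ ω / f₁ - M₀ ω / f₀) ^ 2 ∂P :=
    integral_nonneg fun ω => sq_nonneg _
  refine ⟨?_, by positivity⟩
  rw [integral_div_sub_div_sq_of_memLp hM₁ hM₀]
  ring

/-- Comparison of the asymptotic variance of the QTE estimator under matched-pairs design
(`Σ`) with the variance of the limit of the naive multiplier bootstrap of the pairs (`Σᵖ`):
`Σᵖ − Σ = (1/2)·E[(M₁/f₁ − M₀/f₀)²] ≥ 0`. -/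
theorem variance_comparison_pairs_bootstrap
    {Ω : Type*} [MeasurableSpace Ω] (P : Measure Ω) [IsProbabilityMeasure P]
    (τ f₁ f₀ : ℝ) (hτ : τ ∈ Set.Ioo (0 : ℝ) 1) (hf₁ : 0 < f₁) (hf₀ : 0 < f₀)
    (M₁ M₀ : Ω → ℝ) (hM₁ : MemLp M₁ 2 P) (hM₀ : MemLp M₀ 2 P) :
    ((τ - τ ^ 2) / f₁ ^ 2 + (τ - τ ^ 2) / f₀ ^ 2
        - 2 * (∫ ω, M₁ ω * M₀ ω ∂P) / (f₁ * f₀))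
        - ((τ - τ ^ 2 - ∫ ω, (M₁ ω) ^ 2 ∂P) / f₁ ^ 2
            + (τ - τ ^ 2 - ∫ ω, (M₀ ω) ^ 2 ∂P) / f₀ ^ 2
            + (1 / 2) * ∫ ω, (M₁ ω / f₁ - M₀ ω / f₀) ^ 2 ∂P)
      = (1 / 2) * ∫ ω, (M₁ ω / f₁ - M₀ ω / f₀) ^ 2 ∂P
    ∧ 0 ≤ (1 / 2) * ∫ ω, (M₁ ω / f₁ - M₀ ω / f₀) ^ 2 ∂P :=
  variance_comparison_pairs_bootstrap_general P τ f₁ f₀ M₁ M₀ hM₁ hM₀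
end

section
/- Let τ ∈ (0,1), n ≥ 1, T ∈ ℝ, let Y₁,…,Y_n be real numbers, and define φ(c) = Σ_{i=1}^{n} ρ_τ(Y_i − c) − c·T for c ∈ ℝ. Then a real number c minimizes φ over ℝ if and only if Σ_{i=1}^{n} 1{Y_i < c} ≤ n·τ + T ≤ Σ_{i=1}^{n} 1{Y_i ≤ c}. Moreover, if n·τ + T is not an integer and the Y_i are distinct, then any two minimizers take the same value, namely the h-th order statistic of Y₁,…,Y_n with h = ⌈n·τ + T⌉, provided 0 < n·τ + T < n. -/
/-!
The objective `φ(c) = Σᵢ ρ_τ(Yᵢ - c) - c T` is convex and piecewise linear, with right slope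
`#{Yᵢ ≤ c} - (nτ + T)` and left slope `#{Yᵢ < c} - (nτ + T)` at `c`; so `c` is a minimizer iff the
left slope is `≤ 0` and the right one `≥ 0`. If `a = nτ + T` is not an integer the left slope is
`< 0`, so the counting function jumps at `c`: `c = Yᵢ`, and for distinct `Yᵢ` its rank
`#{Yⱼ ≤ Yᵢ}` lies in `[a, a + 1)`, i.e. equals `⌈a⌉`. Two minimizers `c < c'` would give
`a ≤ #{Yᵢ ≤ c} ≤ #{Yᵢ < c'} ≤ a`, making `a` an integer.
-/

open Finset Filter Topology Function

-- `ρ_τ(y - c) = τ (y - c) + (c - y)⁺`, and `(c - y)⁺` grows by `c' - c` on `[c, c']` when `y ≤ c`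
-- and not at all when `c' ≤ y`.
theorem mul_indicator_le_checkFun_sub {τ y c c' : ℝ} (h : c ≤ c') :
    (c' - c) * ((if y ≤ c then 1 else 0) - τ) ≤ checkFun τ (y - c') - checkFun τ (y - c) := by
  unfold checkFun; split_ifs <;> nlinarith

theorem checkFun_sub_le_mul_indicator {τ y c c' : ℝ} (h : c ≤ c') :
    checkFun τ (y - c') - checkFun τ (y - c) ≤ (c' - c) * ((if y < c' then 1 else 0) - τ) := by
  unfold checkFun; split_ifs <;> nlinarith

section

variable {ι : Type*} [Fintype ι] (τ T : ℝ) (Y : ι → ℝ)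

noncomputable def perturbedCheckLoss (c : ℝ) : ℝ :=
  ∑ i, checkFun τ (Y i - c) - c * T

theorem sum_mul_indicator_sub (p : ι → Prop) [DecidablePred p] (d : ℝ) :
    ∑ i, d * ((if p i then 1 else 0) - τ) - d * T =
      d * (#{i | p i} - (Fintype.card ι * τ + T)) := by
  simp only [← mul_sum, sum_sub_distrib, sum_boole, sum_const, card_univ, nsmul_eq_mul]
  ring

theorem perturbedCheckLoss_sub_ge {c c' : ℝ} (h : c ≤ c') :
    (c' - c) * (#{i | Y i ≤ c} - (Fintype.card ι * τ + T)) ≤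
      perturbedCheckLoss τ T Y c' - perturbedCheckLoss τ T Y c := by
  have hsum := sum_le_sum fun i (_ : i ∈ univ) => mul_indicator_le_checkFun_sub (τ := τ) (y := Y i) h
  rw [sum_sub_distrib] at hsum
  rw [← sum_mul_indicator_sub, perturbedCheckLoss, perturbedCheckLoss]
  linarith

theorem perturbedCheckLoss_sub_le {c c' : ℝ} (h : c ≤ c') :
    perturbedCheckLoss τ T Y c' - perturbedCheckLoss τ T Y c ≤
      (c' - c) * (#{i | Y i < c'} - (Fintype.card ι * τ + T)) := by
  have hsum := sum_le_sum fun i (_ : i ∈ univ) => checkFun_sub_le_mul_indicator (τ := τ) (y := Y i) h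
  rw [sum_sub_distrib] at hsum
  rw [← sum_mul_indicator_sub, perturbedCheckLoss, perturbedCheckLoss]
  linarith

theorem exists_gt_forall_lt_iff_le (c : ℝ) : ∃ r, c < r ∧ ∀ i, Y i < r ↔ Y i ≤ c := by
  have hev : ∀ᶠ r in 𝓝[>] c, ∀ i, Y i < r ↔ Y i ≤ c := by
    refine eventually_all.2 fun i => ?_
    rcases le_or_gt (Y i) c with h | h
    · filter_upwards [self_mem_nhdsWithin] with r hr using iff_of_true (h.trans_lt hr) h
    · filter_upwards [nhdsWithin_le_nhds (eventually_lt_nhds h)] with r hr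
        using iff_of_false hr.not_gt h.not_ge
  exact (eventually_mem_nhdsWithin.and hev).exists

theorem exists_lt_forall_le_iff_lt (c : ℝ) : ∃ l, l < c ∧ ∀ i, Y i ≤ l ↔ Y i < c := by
  obtain ⟨r, hr, h⟩ := exists_gt_forall_lt_iff_le (-Y) (-c)
  refine ⟨-r, by linarith, fun i => ?_⟩
  have hi := h i
  simp only [Pi.neg_apply, neg_lt, neg_le_neg_iff] at hi
  exact not_lt.symm.trans ((not_congr hi).trans not_le)

theorem forall_perturbedCheckLoss_le_iff (c : ℝ) :
    (∀ c', perturbedCheckLoss τ T Y c ≤ perturbedCheckLoss τ T Y c') ↔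
      (#{i | Y i < c} : ℝ) ≤ Fintype.card ι * τ + T ∧
        Fintype.card ι * τ + T ≤ #{i | Y i ≤ c} := by
  constructor
  · intro hmin
    obtain ⟨l, hlc, hl⟩ := exists_lt_forall_le_iff_lt Y c
    obtain ⟨r, hcr, hr⟩ := exists_gt_forall_lt_iff_le Y c
    have hleft := perturbedCheckLoss_sub_ge τ T Y hlc.le
    have hright := perturbedCheckLoss_sub_le τ T Y hcr.le
    rw [filter_congr fun i _ => hl i] at hleft
    rw [filter_congr fun i _ => hr i] at hright
    have := hmin l
    have := hmin r
    constructor <;> nlinarith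
  · rintro ⟨hlt, hle⟩ c'
    rcases le_total c c' with h | h
    · nlinarith [perturbedCheckLoss_sub_ge τ T Y h]
    · nlinarith [perturbedCheckLoss_sub_le τ T Y h]

theorem le_of_le_card_le_of_card_lt_lt {a c c' : ℝ} (hc : a ≤ #{i | Y i ≤ c})
    (hc' : (#{i | Y i < c'} : ℝ) < a) : c' ≤ c := by
  by_contra! hlt
  have : #{i | Y i ≤ c} ≤ #{i | Y i < c'} :=
    card_le_card fun i => by simpa only [mem_filter, mem_univ, true_and] using (·.trans_lt hlt)
  have : (#{i | Y i ≤ c} : ℝ) ≤ #{i | Y i < c'} := by exact_mod_cast this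
  linarith

theorem card_le_eq_card_lt_add_one (hY : Injective Y) (i : ι) :
    #{j | Y j ≤ Y i} = #{j | Y j < Y i} + 1 := by
  classical
  have : filter (fun j => Y j ≤ Y i) univ = insert i (filter (fun j => Y j < Y i) univ) := by
    ext j
    simp [le_iff_lt_or_eq, hY.eq_iff, or_comm]
  rw [this, card_insert_of_notMem (by simp)]

theorem exists_eq_and_card_le_eq_ceil (hY : Injective Y) {a c : ℝ}
    (hlt : (#{i | Y i < c} : ℝ) < a) (hle : a ≤ #{i | Y i ≤ c}) :
    ∃ i, c = Y i ∧ (#{j | Y j ≤ Y i} : ℤ) = ⌈a⌉ := by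
  obtain ⟨i, rfl⟩ : ∃ i, Y i = c := by
    by_contra! hne
    rw [filter_congr fun i _ => le_iff_lt_or_eq.trans (or_iff_left (hne i))] at hle
    linarith
  refine ⟨i, rfl, (Int.ceil_eq_iff.2 ⟨?_, by exact_mod_cast hle⟩).symm⟩
  rw [card_le_eq_card_lt_add_one Y hY]
  push_cast
  linarith

end

theorem gradient_bootstrap_subgradient_general (τ : ℝ)
    (n : ℕ) (T : ℝ) (Y : Fin n → ℝ) :
    (∀ c : ℝ,
      (∀ c' : ℝ,
          (∑ i, checkFun τ (Y i - c)) - c * T ≤ (∑ i, checkFun τ (Y i - c')) - c' * T)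
        ↔ ((∑ i, (if Y i < c then (1 : ℝ) else 0)) ≤ n * τ + T
            ∧ (n : ℝ) * τ + T ≤ ∑ i, (if Y i ≤ c then (1 : ℝ) else 0)))
    ∧ ((∀ m : ℤ, (n : ℝ) * τ + T ≠ (m : ℝ)) → Function.Injective Y →
        0 < (n : ℝ) * τ + T → (n : ℝ) * τ + T < n →
        (∀ c c' : ℝ,
          (∀ c'' : ℝ,
            (∑ i, checkFun τ (Y i - c)) - c * T ≤ (∑ i, checkFun τ (Y i - c'')) - c'' * T) →
          (∀ c'' : ℝ,
            (∑ i, checkFun τ (Y i - c')) - c' * T ≤ (∑ i, checkFun τ (Y i - c'')) - c'' * T) →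
          c = c')
        ∧ (∀ c : ℝ,
          (∀ c'' : ℝ,
            (∑ i, checkFun τ (Y i - c)) - c * T ≤ (∑ i, checkFun τ (Y i - c'')) - c'' * T) →
          ∃ i : Fin n, c = Y i ∧
            ((Finset.univ.filter (fun j => Y j ≤ Y i)).card : ℤ) = ⌈(n : ℝ) * τ + T⌉)) := by
  have hmin_iff (c : ℝ) := forall_perturbedCheckLoss_le_iff τ T Y c
  simp only [Fintype.card_fin, perturbedCheckLoss] at hmin_iff
  refine ⟨fun c => by simpa only [sum_boole] using hmin_iff c, fun hni hY _ _ => ?_⟩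
  have hbounds (c : ℝ) (hc : ∀ c', perturbedCheckLoss τ T Y c ≤ perturbedCheckLoss τ T Y c') :
      (#{i | Y i < c} : ℝ) < n * τ + T ∧ n * τ + T ≤ #{i | Y i ≤ c} := by
    obtain ⟨hlt, hle⟩ := (hmin_iff c).1 hc
    exact ⟨hlt.lt_of_ne fun h => hni #{i | Y i < c} (by rw [← h]; norm_cast), hle⟩
  refine ⟨fun c c' hc hc' => ?_, fun c hc => ?_⟩
  · exact le_antisymm (le_of_le_card_le_of_card_lt_lt Y (hbounds c' hc').2 (hbounds c hc).1)
      (le_of_le_card_le_of_card_lt_lt Y (hbounds c hc).2 (hbounds c' hc').1)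
  · exact exists_eq_and_card_le_eq_ceil Y hY (hbounds c hc).1 (hbounds c hc).2

/-- Sub-gradient characterization for the gradient-bootstrap perturbed quantile objective
`φ(c) = Σᵢ ρ_τ(Yᵢ − c) − c T`: `c` is a minimizer iff
`Σᵢ 1{Yᵢ < c} ≤ nτ + T ≤ Σᵢ 1{Yᵢ ≤ c}`. Moreover, if `nτ + T` is not an integer, the `Yᵢ`
are distinct and `0 < nτ + T < n`, then any two minimizers coincide and equal the `h`-th
order statistic of the `Yᵢ` with `h = ⌈nτ + T⌉`. -/
theorem gradient_bootstrap_subgradient (τ : ℝ) (hτ : τ ∈ Set.Ioo (0 : ℝ) 1)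
    (n : ℕ) (hn : 1 ≤ n) (T : ℝ) (Y : Fin n → ℝ) :
    (∀ c : ℝ,
      (∀ c' : ℝ,
          (∑ i, checkFun τ (Y i - c)) - c * T ≤ (∑ i, checkFun τ (Y i - c')) - c' * T)
        ↔ ((∑ i, (if Y i < c then (1 : ℝ) else 0)) ≤ n * τ + T
            ∧ (n : ℝ) * τ + T ≤ ∑ i, (if Y i ≤ c then (1 : ℝ) else 0)))
    ∧ ((∀ m : ℤ, (n : ℝ) * τ + T ≠ (m : ℝ)) → Function.Injective Y →
        0 < (n : ℝ) * τ + T → (n : ℝ) * τ + T < n →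
        (∀ c c' : ℝ,
          (∀ c'' : ℝ,
            (∑ i, checkFun τ (Y i - c)) - c * T ≤ (∑ i, checkFun τ (Y i - c'')) - c'' * T) →
          (∀ c'' : ℝ,
            (∑ i, checkFun τ (Y i - c')) - c' * T ≤ (∑ i, checkFun τ (Y i - c'')) - c'' * T) →
          c = c')
        ∧ (∀ c : ℝ,
          (∀ c'' : ℝ,
            (∑ i, checkFun τ (Y i - c)) - c * T ≤ (∑ i, checkFun τ (Y i - c'')) - c'' * T) →
          ∃ i : Fin n, c = Y i ∧
            ((Finset.univ.filter (fun j => Y j ≤ Y i)).card : ℤ) = ⌈(n : ℝ) * τ + T⌉)) :=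
  gradient_bootstrap_subgradient_general τ n T Y
end
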